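/- Let S be a 0-left-cancellative semigroup with zero admitting least common multiples. Suppose Λ, Λ' ⊆ t̃S are finite subsets with Λ ∩ S ≠ ∅ and Λ' ∩ S ≠ ∅, and let u ∈ Λ, u' ∈ Λ'. If θ_u(F_Λ) = θ_{u'}(F_{Λ'}), then θ*_u(F*_Λ) = θ*_{u'}(F*_{Λ'}). (Hence the assignment ε(θ_u(F_Λ)) = θ*_u(F*_Λ) gives a well-defined map ε on the family of constructible sets.) -/
import Mathlib


namespace ExSt

variable {S : Type*} [SemigroupWithZero S]

/-- `s` divides `t`: `t = s` or `t = s * u` for some `u`. -/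
def Divides (s t : S) : Prop := t = s ∨ ∃ u : S, t = s * u

/-- `r` is a least common multiple of `s` and `t`. -/
def IsLCM (s t r : S) : Prop :=
  (Set.range (s * ·) ∩ Set.range (t * ·) = Set.range (r * ·)) ∧ Divides s r ∧ Divides t r

/-- `S` is 0-left-cancellative. -/
def LeftCancel0 (S : Type*) [SemigroupWithZero S] : Prop :=
  ∀ s t r : S, s * t = s * r → s * t ≠ 0 → t = r

/-- `S` admits least common multiples. -/
def AdmitsLCM (S : Type*) [SemigroupWithZero S] : Prop :=
  ∀ s t : S, ∃ r : S, IsLCM s t r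

/-- A string in `S`. -/
def IsString (σ : Set S) : Prop :=
  σ.Nonempty ∧ (0 : S) ∉ σ ∧ (∀ s t : S, Divides s t → t ∈ σ → s ∈ σ) ∧
    ∀ s₁ ∈ σ, ∀ s₂ ∈ σ, ∃ s ∈ σ, Divides s₁ s ∧ Divides s₂ s

/-- `F_s = {x | s * x ≠ 0}`. -/
def Fset (s : S) : Set S := {x | s * x ≠ 0}

/-- `E_s = sS \ {0}`. -/
def Eset (s : S) : Set S := {y | ∃ x : S, y = s * x ∧ s * x ≠ 0}

/-- `F_w` for `w` in the unitization `t̃S = S ∪ {1}` (modelled as `Option S`, `none = 1`). -/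
def FsetW : Option S → Set S
  | none => {x | x ≠ 0}
  | some s => Fset s

/-- `E_w` for `w` in the unitization, with `E_1 = S'`. -/
def EsetW : Option S → Set S
  | none => {x | x ≠ 0}
  | some s => Eset s

/-- `F_Λ = ⋂_{w ∈ Λ} F_w`. -/
def FsetLam (Λ : Finset (Option S)) : Set S := ⋂ w ∈ Λ, FsetW w

/-- Left multiplication by `u ∈ t̃S` (with `1 · x = x`). -/
def thetaApp : Option S → S → S
  | none, x => x
  | some u, x => u * x

/-- `θ_u(X)` for `u ∈ t̃S`. -/
def thetaImg (u : Option S) (X : Set S) : Set S := thetaApp u '' X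

/-- The family `𝔈(S)` of constructible sets. -/
def Econs (S : Type*) [SemigroupWithZero S] : Set (Set S) :=
  {X | ∃ Λ : Finset (Option S), (∃ s : S, some s ∈ Λ) ∧ ∃ u ∈ Λ, X = thetaImg u (FsetLam Λ)}

/-- `r*σ = {t | t ∥ r·s for some s ∈ σ}`. -/
def rstar (r : S) (σ : Set S) : Set S := {t | ∃ s ∈ σ, Divides t (r * s)}

/-- `r⁻¹*σ = {t | r·t ∈ σ}`. -/
def rinvstar (r : S) (σ : Set S) : Set S := {t | r * t ∈ σ}

/-- `F*_r`: strings `σ` with `r·s ≠ 0` for all `s ∈ σ`. -/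
def Fstar (r : S) : Set (Set S) := {σ | IsString σ ∧ ∀ s ∈ σ, r * s ≠ 0}

/-- `E*_r`: strings `σ` with `σ ∩ rS ≠ ∅`. -/
def Estar (r : S) : Set (Set S) := {σ | IsString σ ∧ (σ ∩ Set.range (r * ·)).Nonempty}

/-- `F*_w` for `w` in the unitization, with `F*_1` the set of all strings. -/
def FstarW : Option S → Set (Set S)
  | none => {σ | IsString σ}
  | some r => Fstar r

/-- `F*_Λ = ⋂_{w ∈ Λ} F*_w`. -/
def FstarLam (Λ : Finset (Option S)) : Set (Set S) := ⋂ w ∈ Λ, FstarW w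

/-- The action of `u ∈ t̃S` on strings (with `1*σ = σ`). -/
def thetaStarApp : Option S → Set S → Set S
  | none => id
  | some u => rstar u

/-- `θ*_u(Y)` for `u ∈ t̃S`. -/
def thetaStarImg (u : Option S) (Y : Set (Set S)) : Set (Set S) := thetaStarApp u '' Y

/-- A character of the semilattice `E` (values `False`/`True` playing the role of `0`/`1`). -/
def IsCharacter (E : Set (Set S)) (φ : Set S → Prop) : Prop :=
  ¬ φ ∅ ∧ (∃ X ∈ E, φ X) ∧ ∀ X ∈ E, ∀ Y ∈ E, (φ (X ∩ Y) ↔ φ X ∧ φ Y)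

/-- An ultra-character: a character maximal for the pointwise order on `E`. -/
def IsUltraCharacter (E : Set (Set S)) (φ : Set S → Prop) : Prop :=
  IsCharacter E φ ∧
    ∀ ψ : Set S → Prop, IsCharacter E ψ → (∀ X ∈ E, φ X → ψ X) → ∀ X ∈ E, ψ X → φ X

/-- The character `φ_σ` associated with a string `σ`. -/
def phiStr (σ : Set S) (X : Set S) : Prop :=
  ∃ Λ : Finset (Option S), (∃ s : S, some s ∈ Λ) ∧ ∃ u ∈ Λ,
    X = thetaImg u (FsetLam Λ) ∧ σ ∈ thetaStarImg u (FstarLam Λ)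

/-- The set `σ_φ = {s | φ(E_s) = 1}` associated with a character `φ`. -/
def sigmaOf (φ : Set S → Prop) : Set S := {s | φ (Eset s)}

/-- The interior of a string. -/
def strInterior (σ : Set S) : Set S := {s | ∃ x : S, s * x ∈ σ}

lemma div_refl (s : S) : Divides s s := Or.inl rfl

lemma div_trans {a b c : S} (h1 : Divides a b) (h2 : Divides b c) : Divides a c := by
  rcases h1 with rfl | ⟨x, rfl⟩
  · exact h2
  · rcases h2 with rfl | ⟨y, rfl⟩
    · exact Or.inr ⟨x, rfl⟩
    · exact Or.inr ⟨x * y, mul_assoc a x y⟩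

lemma div_mul {r a b : S} (h : Divides a b) : Divides (r * a) (r * b) := by
  rcases h with rfl | ⟨x, rfl⟩
  · exact Or.inl rfl
  · exact Or.inr ⟨x, (mul_assoc r a x).symm⟩

lemma ne_zero_of_div {a b : S} (h : Divides a b) (hb : b ≠ 0) : a ≠ 0 := by
  rintro rfl
  rcases h with rfl | ⟨x, rfl⟩
  · exact hb rfl
  · exact hb (zero_mul x)

lemma FsetW_dclosed {w : Option S} {s t : S} (h : Divides s t) (ht : t ∈ FsetW w) :
    s ∈ FsetW w := by
  cases w with
  | none => exact ne_zero_of_div h ht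
  | some a =>
    rcases h with rfl | ⟨x, rfl⟩
    · exact ht
    · intro h0
      exact ht (by rw [← mul_assoc, h0, zero_mul])

lemma FsetLam_dclosed {Λ : Finset (Option S)} {s t : S} (h : Divides s t)
    (ht : t ∈ FsetLam Λ) : s ∈ FsetLam Λ := by
  simp only [FsetLam, Set.mem_iInter] at ht ⊢
  exact fun w hw => FsetW_dclosed h (ht w hw)

lemma isString_of_FstarW {w : Option S} {σ : Set S} (h : σ ∈ FstarW w) : IsString σ := by
  cases w with
  | none => exact h
  | some a => exact h.1

lemma string_mem_FsetLam {Λ : Finset (Option S)} {σ : Set S} (hσ : σ ∈ FstarLam Λ)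
    (hstr : IsString σ) {t : S} (ht : t ∈ σ) : t ∈ FsetLam Λ := by
  simp only [FsetLam, Set.mem_iInter]
  simp only [FstarLam, Set.mem_iInter] at hσ
  intro w hw
  cases w with
  | none =>
    intro h0
    exact hstr.2.1 (h0 ▸ ht)
  | some a => exact (hσ (some a) hw).2 t ht

lemma rstar_isString {r : S} {σ : Set S} (hstr : IsString σ) (hr : ∀ s ∈ σ, r * s ≠ 0) :
    IsString (rstar r σ) := by
  obtain ⟨⟨s0, hs0⟩, h0, hdcl, hdir⟩ := hstr
  refine ⟨⟨r * s0, ⟨s0, hs0, div_refl _⟩⟩, ?_, ?_, ?_⟩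
  · rintro ⟨s, hs, hd⟩
    rcases hd with hd | ⟨x, hd⟩
    · exact hr s hs hd
    · exact hr s hs (hd.trans (zero_mul x))
  · rintro a b hab ⟨s, hs, hd⟩
    exact ⟨s, hs, div_trans hab hd⟩
  · rintro t1 ⟨s1, hs1, hd1⟩ t2 ⟨s2, hs2, hd2⟩
    obtain ⟨s, hs, hda, hdb⟩ := hdir s1 hs1 s2 hs2
    exact ⟨r * s, ⟨s, hs, div_refl _⟩, div_trans hd1 (div_mul hda),
      div_trans hd2 (div_mul hdb)⟩

lemma div_cancel (hlc : LeftCancel0 S) {r a b : S} (h : Divides (r * a) (r * b))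
    (hb : r * b ≠ 0) : Divides a b := by
  rcases h with h | ⟨z, h⟩
  · exact Or.inl (hlc r b a h hb)
  · exact Or.inr ⟨z, hlc r b (a * z) (by rw [h, mul_assoc]) hb⟩

/-- Intrinsic characterization of `θ*_u(F*_Λ)` in terms of `θ_u(F_Λ)`. -/
lemma thetaStarImg_eq (hlc : LeftCancel0 S) (Λ : Finset (Option S)) (u : Option S)
    (hu : u ∈ Λ) :
    thetaStarImg u (FstarLam Λ) =
      {τ | IsString τ ∧ ∀ t ∈ τ, ∃ y ∈ τ, y ∈ thetaImg u (FsetLam Λ) ∧ Divides t y} := by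
  ext τ
  constructor
  · rintro ⟨σ, hσ, rfl⟩
    have hσ' := hσ
    simp only [FstarLam, Set.mem_iInter] at hσ'
    have hσu : σ ∈ FstarW u := hσ' u hu
    have hstr : IsString σ := isString_of_FstarW hσu
    cases u with
    | none =>
      refine ⟨hstr, fun t ht => ⟨t, ht, ⟨t, string_mem_FsetLam hσ hstr ht, rfl⟩, div_refl t⟩⟩
    | some r =>
      have hr : ∀ s ∈ σ, r * s ≠ 0 := hσu.2
      refine ⟨rstar_isString hstr hr, ?_⟩
      rintro t ⟨s, hs, hd⟩
      exact ⟨r * s, ⟨s, hs, div_refl _⟩, ⟨s, string_mem_FsetLam hσ hstr hs, rfl⟩, hd⟩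
  · rintro ⟨hstr, hdiv⟩
    cases u with
    | none =>
      refine ⟨τ, ?_, rfl⟩
      simp only [FstarLam, Set.mem_iInter]
      intro w hw
      cases w with
      | none => exact hstr
      | some a =>
        refine ⟨hstr, fun t ht => ?_⟩
        obtain ⟨y, hyτ, ⟨x, hxF, hxy⟩, hdvd⟩ := hdiv t ht
        have : x ∈ FsetW (some a) := by
          simp only [FsetLam, Set.mem_iInter] at hxF
          exact hxF (some a) hw
        have hxy' : x = y := hxy
        exact FsetW_dclosed hdvd (hxy' ▸ this)
    | some r =>
      set σ : Set S := rinvstar r τ with hσdef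
      have hcov : ∀ t ∈ τ, ∃ y, y ∈ FsetLam Λ ∧ r * y ∈ τ ∧ Divides t (r * y) := by
        intro t ht
        obtain ⟨y, hyτ, ⟨x, hxF, hxy⟩, hdvd⟩ := hdiv t ht
        have hxy' : r * x = y := hxy
        exact ⟨x, hxF, hxy' ▸ hyτ, hxy' ▸ hdvd⟩
      have hne : ∀ x ∈ σ, r * x ≠ 0 := by
        intro x hx h0
        exact hstr.2.1 (h0 ▸ hx)
      have hσsub : ∀ x ∈ σ, x ∈ FsetLam Λ := by
        intro x hx
        obtain ⟨y, hyF, hyτ, hdvd⟩ := hcov (r * x) hx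
        have hry : r * y ≠ 0 := fun h0 => hstr.2.1 (h0 ▸ hyτ)
        exact FsetLam_dclosed (div_cancel hlc hdvd hry) hyF
      have hσstr : IsString σ := by
        obtain ⟨⟨t0, ht0⟩, h0, hdcl, hdir⟩ := hstr
        refine ⟨?_, ?_, ?_, ?_⟩
        · obtain ⟨y, _, hyτ, _⟩ := hcov t0 ht0
          exact ⟨y, hyτ⟩
        · intro hm
          have hm' : r * (0 : S) ∈ τ := hm
          exact h0 (by simpa using hm')
        · intro a b hab hb
          exact hdcl (r * a) (r * b) (div_mul hab) hb
        · intro x1 hx1 x2 hx2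
          obtain ⟨t, ht, hd1, hd2⟩ := hdir (r * x1) hx1 (r * x2) hx2
          obtain ⟨y, _, hyτ, hdvd⟩ := hcov t ht
          have hry : r * y ≠ 0 := fun hh => h0 (hh ▸ hyτ)
          exact ⟨y, hyτ, div_cancel hlc (div_trans hd1 hdvd) hry,
            div_cancel hlc (div_trans hd2 hdvd) hry⟩
      refine ⟨σ, ?_, ?_⟩
      · simp only [FstarLam, Set.mem_iInter]
        intro w hw
        cases w with
        | none => exact hσstr
        | some a =>
          refine ⟨hσstr, fun x hx => ?_⟩
          have := hσsub x hx
          simp only [FsetLam, Set.mem_iInter] at this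
          exact this (some a) hw
      · show rstar r σ = τ
        ext t
        constructor
        · rintro ⟨s, hs, hd⟩
          exact hstr.2.2.1 t (r * s) hd hs
        · intro ht
          obtain ⟨y, _, hyτ, hdvd⟩ := hcov t ht
          exact ⟨y, hyτ, hdvd⟩

/-- The map `ε(θ_u(F_Λ)) = θ*_u(F*_Λ)` is well defined on constructible sets. -/
theorem epsilon_well_defined (hlc : LeftCancel0 S) (hlcm : AdmitsLCM S)
    (Λ Λ' : Finset (Option S)) (hΛ : ∃ s : S, some s ∈ Λ) (hΛ' : ∃ s : S, some s ∈ Λ')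
    (u : Option S) (hu : u ∈ Λ) (u' : Option S) (hu' : u' ∈ Λ')
    (h : thetaImg u (FsetLam Λ) = thetaImg u' (FsetLam Λ')) :
    thetaStarImg u (FstarLam Λ) = thetaStarImg u' (FstarLam Λ') := by
  rw [thetaStarImg_eq hlc Λ u hu, thetaStarImg_eq hlc Λ' u' hu', h]

end ExSt
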